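/- (Hurewicz dichotomy for closed sets, one direction) If F ⊆ ℕ^ℕ is closed and not σ-compact, then F contains a closed subset homeomorphic to ℕ^ℕ. Specifically, taking T = tree(F), the subtree of nodes u ∈ T such that [T_u] is not σ-compact is a nonempty pruned tree with an infinitely branching node above every node, yielding a closed copy of ℕ^ℕ inside F. -/

import Mathlib

/-- The restriction x↾m of x ∈ ℕ^ℕ, as a finite string. -/
def res (x : ℕ → ℕ) (m : ℕ) : List ℕ := List.ofFn fun i : Fin m => x i

/-- A tree on ℕ: a set of finite strings closed under initial segments. -/
def IsTree (T : Set (List ℕ)) : Prop := ∀ s : List ℕ, ∀ n : ℕ, s ++ [n] ∈ T → s ∈ T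

/-- A pruned tree: every node has an immediate successor in the tree. -/
def Pruned (T : Set (List ℕ)) : Prop := ∀ s ∈ T, ∃ n : ℕ, s ++ [n] ∈ T

/-- Finitely branching: every node has only finitely many immediate successors. -/
def FinBranching (T : Set (List ℕ)) : Prop := ∀ s ∈ T, {n : ℕ | s ++ [n] ∈ T}.Finite

/-- [T], the set of infinite branches of T. -/
def Branches (T : Set (List ℕ)) : Set (ℕ → ℕ) := {x | ∀ m : ℕ, res x m ∈ T}

/-- tree(X), the tree of finite initial segments of elements of X. -/
def treeOf (X : Set (ℕ → ℕ)) : Set (List ℕ) := {s | ∃ x ∈ X, ∃ n : ℕ, s = res x n}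

/-- The Baire interval (basic clopen set) N_t. -/
def Cyl (t : List ℕ) : Set (ℕ → ℕ) := {x | res x t.length = t}

/-- s is a branching point of T. -/
def Branching (T : Set (List ℕ)) (s : List ℕ) : Prop :=
  s ∈ T ∧ ∃ k n : ℕ, k ≠ n ∧ s ++ [k] ∈ T ∧ s ++ [n] ∈ T

/-- A perfect tree: every node extends to a branching node. -/
def PerfectTree (T : Set (List ℕ)) : Prop := ∀ s ∈ T, ∃ t, s <+: t ∧ Branching T t

/-- X is σ-compact: a countable union of compact sets. -/
def SigmaCpt (X : Set (ℕ → ℕ)) : Prop :=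
  ∃ K : ℕ → Set (ℕ → ℕ), (∀ n, IsCompact (K n)) ∧ X = ⋃ n, K n

/-- A tree on ℕ × ℕ: pairs of strings of equal length, closed under initial segments. -/
def IsTree2 (S : Set (List ℕ × List ℕ)) : Prop :=
  (∀ p ∈ S, p.1.length = p.2.length) ∧
  ∀ u v : List ℕ, ∀ n m : ℕ, (u ++ [n], v ++ [m]) ∈ S → (u, v) ∈ S

/-- The set of branches of a tree on pairs. -/
def Branches2 (S : Set (List ℕ × List ℕ)) : Set ((ℕ → ℕ) × (ℕ → ℕ)) :=
  {p | ∀ n : ℕ, (res p.1 n, res p.2 n) ∈ S}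

/-- A_{uv}: the projection of the part of [S] above the node (u,v). -/
def projAbove (S : Set (List ℕ × List ℕ)) (u v : List ℕ) : Set (ℕ → ℕ) :=
  {x | ∃ y : ℕ → ℕ, (x, y) ∈ Branches2 S ∧ res x u.length = u ∧ res y v.length = v}

/-- An ideal on ℕ containing all finite sets. -/
def IsIdealN (I : Set (Set ℕ)) : Prop :=
  ∅ ∈ I ∧ (∀ a ∈ I, ∀ b : Set ℕ, b ⊆ a → b ∈ I) ∧ (∀ a ∈ I, ∀ b ∈ I, a ∪ b ∈ I) ∧
  ∀ a : Set ℕ, a.Finite → a ∈ I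

/-- X ⊆ ℕ^ℕ is I-small: every node of tree(X) has successor set in I. -/
def ISmall (I : Set (Set ℕ)) (X : Set (ℕ → ℕ)) : Prop :=
  ∀ s ∈ treeOf X, {n : ℕ | s ++ [n] ∈ treeOf X} ∈ I

/-- X is σ-I-small: a countable union of I-small sets. -/
def SigmaISmall (I : Set (Set ℕ)) (X : Set (ℕ → ℕ)) : Prop :=
  ∃ Z : ℕ → Set (ℕ → ℕ), (∀ n, ISmall I (Z n)) ∧ X = ⋃ n, Z n

/-! Let `S` be the set of nodes `u` of `tree(F)` for which `F ∩ N_u` is not σ-compact. Since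
`N_u = ⋃ₙ N_{u⌢n}` and σ-compactness passes to closed subsets, `S` is a pruned tree containing the
root. If no node of `S` above `u ∈ S` had infinitely many children in `S`, the branches of `S`
through `u` would form a compact set (König), while the points of `F ∩ N_u` leaving `S` lie in the
countably many σ-compact pieces `F ∩ N_t`, `t ∉ S`; so `F ∩ N_u` would be σ-compact.

Choosing infinitely branching nodes of `S` recursively yields a map `φ` on finite strings with
`φ(s⌢n)` extending `φ(s)⌢c(n)`, where `c` enumerates the children of `φ(s)` in `S` injectively.
The map it induces on branches is continuous and injective, and if its values converge along a
filter, the coordinates of the arguments stabilise one at a time; so it is a closed embedding,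
with image inside `[S] ⊆ F`. -/

open Set Filter Topology Function

@[simp] lemma length_res (x : ℕ → ℕ) (m : ℕ) : (res x m).length = m := by
  simp [res]

@[simp] lemma getElem_res (x : ℕ → ℕ) (m i : ℕ) (h : i < (res x m).length) :
    (res x m)[i] = x i := by
  simp [res]

@[simp] lemma res_zero (x : ℕ → ℕ) : res x 0 = [] := rfl

lemma res_succ (x : ℕ → ℕ) (m : ℕ) : res x (m + 1) = res x m ++ [x m] := by
  rw [res, List.ofFn_succ']
  simp [res]

lemma res_eq_res_iff {x y : ℕ → ℕ} {m : ℕ} : res x m = res y m ↔ ∀ i < m, x i = y i := by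
  simp [res, List.ofFn_inj, funext_iff, Fin.forall_iff]

lemma res_prefix_res (x : ℕ → ℕ) {k m : ℕ} (h : k ≤ m) : res x k <+: res x m := by
  induction m, h using Nat.le_induction with
  | base => exact List.prefix_refl _
  | succ m _ ih => exact ih.trans (res_succ x m ▸ List.prefix_append _ _)

lemma isClopen_setOf_res_mem (k : ℕ) (A : Set (List ℕ)) : IsClopen {x : ℕ → ℕ | res x k ∈ A} :=
  (isClopen_discrete ((fun v : Fin k → ℕ => List.ofFn v) ⁻¹' A)).preimage
    (continuous_pi fun i => continuous_apply (i : ℕ))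

lemma isClosed_Cyl (t : List ℕ) : IsClosed (Cyl t) :=
  (isClopen_setOf_res_mem t.length {t}).isClosed

lemma isClosed_Branches (T : Set (List ℕ)) : IsClosed (Branches T) := by
  simpa only [Branches, ofPred_forall] using
    isClosed_iInter fun m => (isClopen_setOf_res_mem m T).isClosed

lemma res_mem_Cyl (x : ℕ → ℕ) (m : ℕ) : x ∈ Cyl (res x m) := by
  simp [Cyl]

lemma prefix_res_of_mem_Cyl {x : ℕ → ℕ} {t : List ℕ} (hx : x ∈ Cyl t) {m : ℕ}
    (hm : t.length ≤ m) : t <+: res x m :=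
  hx ▸ res_prefix_res x hm

lemma res_prefix_of_mem_Cyl {x : ℕ → ℕ} {t : List ℕ} (hx : x ∈ Cyl t) {m : ℕ}
    (hm : m ≤ t.length) : res x m <+: t :=
  hx ▸ res_prefix_res x hm

lemma Cyl_res (x : ℕ → ℕ) (m : ℕ) : Cyl (res x m) = PiNat.cylinder x m := by
  ext y
  simp [Cyl, res_eq_res_iff, PiNat.mem_cylinder_iff]

lemma Cyl_anti {u t : List ℕ} (h : u <+: t) : Cyl t ⊆ Cyl u := fun x hx =>
  (List.prefix_of_prefix_length_le (res_prefix_of_mem_Cyl hx h.length_le) h (by simp)).eq_of_length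
    (by simp)

@[simp] lemma Cyl_nil : Cyl [] = univ := by
  ext x
  simp [Cyl]

lemma Cyl_eq_iUnion (u : List ℕ) : Cyl u = ⋃ n, Cyl (u ++ [n]) := by
  refine Subset.antisymm (fun x hx => mem_iUnion.2 ⟨x u.length, ?_⟩)
    (iUnion_subset fun n => Cyl_anti (List.prefix_append u [n]))
  simp only [Cyl, mem_ofPred_eq, List.length_append, List.length_singleton, res_succ]
  rw [hx]

lemma mem_treeOf_iff {X : Set (ℕ → ℕ)} {t : List ℕ} : t ∈ treeOf X ↔ (X ∩ Cyl t).Nonempty := by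
  constructor
  · rintro ⟨x, hx, n, rfl⟩
    exact ⟨x, hx, res_mem_Cyl x n⟩
  · rintro ⟨x, hx, hxt⟩
    exact ⟨x, hx, t.length, hxt.symm⟩

lemma branches_treeOf_subset {F : Set (ℕ → ℕ)} (hF : IsClosed F) : Branches (treeOf F) ⊆ F := by
  intro z hz
  rw [← hF.closure_eq, (PiNat.isTopologicalBasis_cylinders (E := fun _ => ℕ)).mem_closure_iff]
  rintro _ ⟨y, n, rfl⟩ hzy
  rw [← PiNat.mem_cylinder_iff_eq.1 hzy, ← Cyl_res, inter_comm, ← mem_treeOf_iff]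
  exact hz n

lemma IsTree.mem_of_prefix {T : Set (List ℕ)} (hT : IsTree T) {s t : List ℕ} (ht : t ∈ T)
    (h : s <+: t) : s ∈ T := by
  induction t using List.reverseRecOn with
  | nil => rwa [List.prefix_nil.1 h]
  | append_singleton t n ih =>
    rcases List.prefix_concat_iff.1 h with rfl | h
    · exact ht
    · exact ih (hT t n ht) h

lemma isCompact_of_finite_image_res {B : Set (ℕ → ℕ)} (hB : IsClosed B) (N : ℕ)
    (hfin : ∀ m ≥ N, ((res · m) '' B).Finite) : IsCompact B := by
  have hcoord (i : ℕ) : ((· i) '' B).Finite := by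
    refine ((hfin (max N (i + 1)) (le_max_left _ _)).image fun t => t.getD i 0).subset ?_
    rintro _ ⟨x, hx, rfl⟩
    exact ⟨res x _, mem_image_of_mem _ hx, by simp [List.getD_eq_getElem?_getD]⟩
  exact (isCompact_univ_pi fun i => (hcoord i).isCompact).of_isClosed_subset hB
    fun x hx => mem_univ_pi.2 fun i => mem_image_of_mem _ hx

lemma isCompact_branches_inter_Cyl {T : Set (List ℕ)} {u : List ℕ}
    (hfin : ∀ t ∈ T, u <+: t → {n | t ++ [n] ∈ T}.Finite) : IsCompact (Branches T ∩ Cyl u) := by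
  refine isCompact_of_finite_image_res ((isClosed_Branches T).inter (isClosed_Cyl u)) u.length
    fun m hm => ?_
  induction m, hm using Nat.le_induction with
  | base => exact (finite_singleton u).subset (image_subset_iff.2 fun x hx => hx.2)
  | succ m hm ih =>
    refine Finite.subset (s := ⋃ t ∈ (res · m) '' (Branches T ∩ Cyl u),
      (t ++ [·]) '' {n | t ++ [n] ∈ T}) (ih.biUnion fun t ht => ?_) ?_
    · obtain ⟨x, hx, rfl⟩ := ht
      exact (hfin _ (hx.1 m) (prefix_res_of_mem_Cyl hx.2 hm)).image _
    · rintro _ ⟨x, hx, rfl⟩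
      refine mem_iUnion₂.2 ⟨res x m, mem_image_of_mem _ hx, x m, ?_, (res_succ x m).symm⟩
      simpa [← res_succ] using hx.1 (m + 1)

lemma sigmaCpt_iff_isSigmaCompact {X : Set (ℕ → ℕ)} : SigmaCpt X ↔ IsSigmaCompact X :=
  exists_congr fun _ => and_congr_right fun _ => eq_comm

lemma IsSigmaCompact.inter_right {X : Type*} [TopologicalSpace X] {s c : Set X}
    (hs : IsSigmaCompact s) (hc : IsClosed c) : IsSigmaCompact (s ∩ c) := by
  obtain ⟨K, hK, rfl⟩ := hs
  exact ⟨fun n => K n ∩ c, fun n => (hK n).inter_right hc, (iUnion_inter _ _).symm⟩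

lemma IsSigmaCompact.union {X : Type*} [TopologicalSpace X] {s t : Set X}
    (hs : IsSigmaCompact s) (ht : IsSigmaCompact t) : IsSigmaCompact (s ∪ t) := by
  rw [union_eq_iUnion]
  exact isSigmaCompact_iUnion _ (Bool.forall_bool.2 ⟨ht, hs⟩)

def hurewiczTree (F : Set (ℕ → ℕ)) : Set (List ℕ) :=
  {u | u ∈ treeOf F ∧ ¬ IsSigmaCompact (F ∩ Cyl u)}

section HurewiczTree

variable {F : Set (ℕ → ℕ)}

lemma mem_hurewiczTree_iff {t : List ℕ} : t ∈ hurewiczTree F ↔ ¬ IsSigmaCompact (F ∩ Cyl t) :=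
  ⟨And.right, fun h => ⟨mem_treeOf_iff.2 <| nonempty_iff_ne_empty.2 fun he =>
    h (he ▸ isSigmaCompact_empty), h⟩⟩

lemma isSigmaCompact_inter_Cyl_of_notMem {t : List ℕ} (ht : t ∉ hurewiczTree F) :
    IsSigmaCompact (F ∩ Cyl t) :=
  not_not.1 (mt mem_hurewiczTree_iff.2 ht)

lemma nil_mem_hurewiczTree (h : ¬ IsSigmaCompact F) : [] ∈ hurewiczTree F := by
  rwa [mem_hurewiczTree_iff, Cyl_nil, inter_univ]

lemma isTree_hurewiczTree : IsTree (hurewiczTree F) := by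
  intro s n h
  rw [mem_hurewiczTree_iff] at h ⊢
  refine fun hs => h ?_
  rw [← inter_eq_right.2 (Cyl_anti (List.prefix_append s [n])), ← inter_assoc]
  exact hs.inter_right (isClosed_Cyl _)

lemma pruned_hurewiczTree : Pruned (hurewiczTree F) := by
  intro u hu
  by_contra! h
  refine mem_hurewiczTree_iff.1 hu ?_
  rw [Cyl_eq_iUnion, inter_iUnion]
  exact isSigmaCompact_iUnion _ fun n => isSigmaCompact_inter_Cyl_of_notMem (h n)

lemma isSigmaCompact_diff_branches_hurewiczTree :
    IsSigmaCompact (F \ Branches (hurewiczTree F)) := by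
  have : F \ Branches (hurewiczTree F) = ⋃ t ∈ (hurewiczTree F)ᶜ, F ∩ Cyl t := by
    ext x
    simp only [Set.mem_sdiff, Branches, mem_ofPred_eq, not_forall, mem_iUnion, mem_compl_iff,
      mem_inter_iff, exists_prop]
    constructor
    · rintro ⟨hx, m, hm⟩
      exact ⟨res x m, hm, hx, res_mem_Cyl x m⟩
    · rintro ⟨t, ht, hx, hxt⟩
      exact ⟨hx, t.length, by rwa [hxt]⟩
  rw [this]
  exact isSigmaCompact_biUnion (to_countable _) fun t => isSigmaCompact_inter_Cyl_of_notMem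

lemma exists_infinite_succ_hurewiczTree (hF : IsClosed F) {u : List ℕ}
    (hu : u ∈ hurewiczTree F) :
    ∃ t ∈ hurewiczTree F, u <+: t ∧ {n | t ++ [n] ∈ hurewiczTree F}.Infinite := by
  by_contra! hfin
  refine mem_hurewiczTree_iff.1 hu ?_
  have hcover := (isCompact_branches_inter_Cyl hfin).isSigmaCompact.union
    (isSigmaCompact_diff_branches_hurewiczTree (F := F))
  refine hcover.of_isClosed_subset (hF.inter (isClosed_Cyl u)) ?_
  rintro x ⟨hxF, hxu⟩
  by_cases hx : x ∈ Branches (hurewiczTree F)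
  · exact Or.inl ⟨hx, hxu⟩
  · exact Or.inr ⟨hxF, hx⟩

lemma branches_hurewiczTree_subset (hF : IsClosed F) : Branches (hurewiczTree F) ⊆ F :=
  fun _ hx => branches_treeOf_subset hF fun m => (hx m).1

end HurewiczTree

/-- Under the step condition below `φ (res x (i + 1))` has length `> i`, so the default `0` is
never read. -/
def branchMap (φ : List ℕ → List ℕ) (x : ℕ → ℕ) : ℕ → ℕ :=
  fun i => (φ (res x (i + 1))).getD i 0

lemma continuous_branchMap (φ : List ℕ → List ℕ) : Continuous (branchMap φ) :=
  continuous_pi fun i => IsLocallyConstant.continuous fun s =>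
    (isClopen_setOf_res_mem (i + 1) ((fun t => (φ t).getD i 0) ⁻¹' s)).isOpen

section BranchMap

variable {φ : List ℕ → List ℕ} {c : List ℕ → ℕ → ℕ}
  (hstep : ∀ s n, φ s ++ [c s n] <+: φ (s ++ [n]))
include hstep

lemma apply_prefix_apply {s t : List ℕ} (h : s <+: t) : φ s <+: φ t := by
  induction t using List.reverseRecOn with
  | nil => rw [List.prefix_nil.1 h]
  | append_singleton t n ih =>
    rcases List.prefix_concat_iff.1 h with rfl | h
    · exact List.prefix_refl _
    · exact (ih h).trans ((List.prefix_append _ _).trans (hstep t n))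

lemma length_le_of_step (s : List ℕ) : s.length ≤ (φ s).length := by
  induction s using List.reverseRecOn with
  | nil => simp
  | append_singleton s n ih =>
    have := (hstep s n).length_le
    simp only [List.length_append, List.length_singleton] at this ⊢
    omega

lemma branchMap_eq_getElem (x : ℕ → ℕ) {m i : ℕ} (hi : i < (φ (res x m)).length) :
    branchMap φ x i = (φ (res x m))[i] := by
  have hi' : i < (φ (res x (i + 1))).length :=
    (length_le_of_step hstep _).trans_lt' (by simp)
  rw [branchMap, List.getD_eq_getElem _ _ hi']
  rcases le_total (i + 1) m with h | h
  · exact (apply_prefix_apply hstep (res_prefix_res x h)).getElem hi'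
  · exact ((apply_prefix_apply hstep (res_prefix_res x h)).getElem hi).symm

lemma branchMap_mem_Cyl (x : ℕ → ℕ) (m : ℕ) : branchMap φ x ∈ Cyl (φ (res x m)) :=
  List.ext_getElem (by simp) fun _ _ h => by rw [getElem_res, branchMap_eq_getElem hstep x h]

lemma branchMap_apply_length (x : ℕ → ℕ) (i : ℕ) :
    branchMap φ x (φ (res x i)).length = c (res x i) (x i) := by
  have h := hstep (res x i) (x i)
  rw [← res_succ] at h
  rw [branchMap_eq_getElem hstep x (h.length_le.trans_lt' (by simp)), ← h.getElem (by simp)]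
  simp

variable (hc : ∀ s, Injective (c s))
include hc

lemma res_succ_eq_of_branchMap_eq {x y : ℕ → ℕ} {i : ℕ} (hres : res x i = res y i)
    (h : branchMap φ x (φ (res x i)).length = branchMap φ y (φ (res x i)).length) :
    res x (i + 1) = res y (i + 1) := by
  rw [branchMap_apply_length hstep, hres, branchMap_apply_length hstep] at h
  rw [res_succ, res_succ, hres, hc _ h]

lemma injective_branchMap : Injective (branchMap φ) := by
  intro x y hxy
  have hres (i : ℕ) : res x i = res y i := by
    induction i with
    | zero => rfl
    | succ i ih => exact res_succ_eq_of_branchMap_eq hstep hc ih (by rw [hxy])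
  exact funext fun i => res_eq_res_iff.1 (hres (i + 1)) i i.lt_succ_self

lemma exists_eventually_res_eq {l : Filter (ℕ → ℕ)} [l.NeBot] {z : ℕ → ℕ}
    (h : Tendsto (branchMap φ) l (𝓝 z)) (i : ℕ) : ∃ y₀, ∀ᶠ y in l, res y i = res y₀ i := by
  induction i with
  | zero => exact ⟨z, Eventually.of_forall fun _ => rfl⟩
  | succ i ih =>
    obtain ⟨y₀, hy₀⟩ := ih
    have hz : ∀ᶠ y in l, branchMap φ y (φ (res y₀ i)).length = z (φ (res y₀ i)).length := by
      simpa only [nhds_discrete, tendsto_pure] using tendsto_pi_nhds.1 h (φ (res y₀ i)).length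
    obtain ⟨y₁, hy₁res, hy₁z⟩ := (hy₀.and hz).exists
    refine ⟨y₁, (hy₀.and hz).mono fun y ⟨hyres, hyz⟩ => ?_⟩
    refine res_succ_eq_of_branchMap_eq hstep hc (hyres.trans hy₁res.symm) ?_
    rw [hyres]
    exact hyz.trans hy₁z.symm

lemma exists_branchMap_eq_of_tendsto {l : Filter (ℕ → ℕ)} [l.NeBot] {z : ℕ → ℕ}
    (h : Tendsto (branchMap φ) l (𝓝 z)) : ∃ x, branchMap φ x = z ∧ l ≤ 𝓝 x := by
  choose y hy using exists_eventually_res_eq hstep hc h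
  have hlim : l ≤ 𝓝 fun i => y (i + 1) i := by
    refine tendsto_id'.1 (tendsto_pi_nhds.2 fun i => ?_)
    rw [nhds_discrete, tendsto_pure]
    exact (hy (i + 1)).mono fun y' h' => res_eq_res_iff.1 h' i i.lt_succ_self
  exact ⟨_, tendsto_nhds_unique (((continuous_branchMap φ).tendsto _).comp
    (tendsto_id'.2 hlim)) h, hlim⟩

theorem isClosedEmbedding_branchMap : IsClosedEmbedding (branchMap φ) := by
  have hinj := injective_branchMap hstep hc
  refine ⟨⟨isInducing_iff_nhds.2 fun x => le_antisymm
    ((continuous_branchMap φ).tendsto x).le_comap ?_, hinj⟩, ?_⟩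
  · have : (comap (branchMap φ) (𝓝 (branchMap φ x))).NeBot :=
      comap_neBot fun t ht => ⟨x, mem_of_mem_nhds ht⟩
    obtain ⟨x', hx', hle⟩ := exists_branchMap_eq_of_tendsto hstep hc
      (tendsto_comap (x := 𝓝 (branchMap φ x)))
    rwa [hinj hx'] at hle
  · refine isClosed_iff_frequently.2 fun z hz => ?_
    have := comap_neBot_iff_frequently.2 hz
    obtain ⟨x, hx, -⟩ := exists_branchMap_eq_of_tendsto hstep hc (tendsto_comap (x := 𝓝 z))
    exact ⟨x, hx⟩

end BranchMap

def InfBranchingAt (T : Set (List ℕ)) (t : List ℕ) : Prop :=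
  t ∈ T ∧ {n | t ++ [n] ∈ T}.Infinite

section Construction

variable {T : Set (List ℕ)}
  (hsplit : ∀ u ∈ T, ∃ t ∈ T, u <+: t ∧ {n | t ++ [n] ∈ T}.Infinite)
include hsplit

lemma exists_successor_choice : ∃ (c : List ℕ → ℕ → ℕ) (next : List ℕ → ℕ → List ℕ),
    ∀ t, InfBranchingAt T t →
      Injective (c t) ∧ ∀ n, InfBranchingAt T (next t n) ∧ t ++ [c t n] <+: next t n := by
  have (t : List ℕ) : ∃ (c : ℕ → ℕ) (next : ℕ → List ℕ), InfBranchingAt T t →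
      Injective c ∧ ∀ n, InfBranchingAt T (next n) ∧ t ++ [c n] <+: next n := by
    by_cases ht : InfBranchingAt T t
    · let e := ht.2.natEmbedding
      choose next hnext using fun n => hsplit _ (e n).2
      exact ⟨fun n => e n, next, fun _ => ⟨Subtype.val_injective.comp e.injective,
        fun n => ⟨⟨(hnext n).1, (hnext n).2.2⟩, (hnext n).2.1⟩⟩⟩
    · exact ⟨id, fun _ => [], fun h => absurd h ht⟩
  choose c next h using this
  exact ⟨c, next, h⟩

theorem exists_isClosedEmbedding_range_subset_branches (hT : IsTree T) (hne : T.Nonempty) :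
    ∃ f : (ℕ → ℕ) → ℕ → ℕ, IsClosedEmbedding f ∧ range f ⊆ Branches T := by
  obtain ⟨c, next, hnext⟩ := exists_successor_choice hsplit
  obtain ⟨root, hroot⟩ : ∃ t, InfBranchingAt T t := by
    obtain ⟨t, ht, -, hinf⟩ := hsplit _ hne.some_mem
    exact ⟨t, ht, hinf⟩
  let φ : List ℕ → List ℕ := fun s => s.reverseRecOn root fun _ n p => next p n
  have hφ0 : φ [] = root := List.reverseRecOn_nil ..
  have hφ (s : List ℕ) (n : ℕ) : φ (s ++ [n]) = next (φ s) n := List.reverseRecOn_concat ..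
  have hφT (s : List ℕ) : InfBranchingAt T (φ s) := by
    induction s using List.reverseRecOn with
    | nil => rwa [hφ0]
    | append_singleton s n ih => exact hφ s n ▸ ((hnext _ ih).2 n).1
  have hstep (s : List ℕ) (n : ℕ) : φ s ++ [c (φ s) n] <+: φ (s ++ [n]) :=
    hφ s n ▸ ((hnext _ (hφT s)).2 n).2
  refine ⟨branchMap φ, isClosedEmbedding_branchMap hstep fun s => (hnext _ (hφT s)).1, ?_⟩
  rintro _ ⟨x, rfl⟩ m
  exact hT.mem_of_prefix (hφT (res x m)).1 (res_prefix_of_mem_Cyl (branchMap_mem_Cyl hstep x m)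
    (by simpa using length_le_of_step hstep (res x m)))

end Construction

theorem hurewicz_closed_case (F : Set (ℕ → ℕ)) (hF : IsClosed F)
    (hns : ¬ SigmaCpt F) (S : Set (List ℕ))
    (hS : S = {u | u ∈ treeOf F ∧ ¬ SigmaCpt (F ∩ Cyl u)}) :
    (S.Nonempty ∧ IsTree S ∧ Pruned S ∧
      ∀ u ∈ S, ∃ t ∈ S, u <+: t ∧ {n : ℕ | t ++ [n] ∈ S}.Infinite) ∧
    ∃ Y : Set (ℕ → ℕ), Y ⊆ F ∧ IsClosed Y ∧ Nonempty ((ℕ → ℕ) ≃ₜ Y) := by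
  obtain rfl : S = hurewiczTree F := by
    simp only [hS, hurewiczTree, sigmaCpt_iff_isSigmaCompact]
  rw [sigmaCpt_iff_isSigmaCompact] at hns
  have hroot := nil_mem_hurewiczTree hns
  have hsplit := fun u (hu : u ∈ hurewiczTree F) =>
    exists_infinite_succ_hurewiczTree hF hu
  obtain ⟨f, hf, hfS⟩ := exists_isClosedEmbedding_range_subset_branches hsplit
    isTree_hurewiczTree ⟨[], hroot⟩
  exact ⟨⟨⟨[], hroot⟩, isTree_hurewiczTree, pruned_hurewiczTree, hsplit⟩,
    range f, hfS.trans (branches_hurewiczTree_subset hF), hf.isClosed_range,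
    ⟨hf.isEmbedding.toHomeomorph⟩⟩
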